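/- For the P⁰ (piecewise constant) semi-discrete DG scheme with general flux parameters α, β₁, β₂, the dispersion determinant takes the form C₂ξ² + C₁ξ + C₀ + C₋₁ξ⁻¹ + C₋₂ξ⁻² in ξ = e^{ikh}, where the coefficients of ξ² and ξ⁻² both equal (−1 + 4(α² + β₁β₂)); consequently, if α² + β₁β₂ = 1/4 the discrete wavenumbers are roots of a quadratic polynomial in ξ, while if α² + β₁β₂ ≠ 1/4 they are roots of a quartic polynomial in ξ. -/
import Mathlib


open Complex

/-- The `P⁰` semi-discrete DG dispersion determinant, as a function of
`ξ = e^{ikh}`, with flux parameters `α, β₁, β₂`, Lorentz permittivity `ε`,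
angular frequency `ω`, mesh size `h`, and `Kex = k_ex h = ω√ε h`. -/
noncomputable def dgP0Det (α β₁ β₂ : ℝ) (ε Kex : ℂ) (ω h : ℝ) (ξ : ℂ) : ℂ :=
  (ξ⁻¹ ^ 2 + ξ ^ 2) * (-1 + 4 * ((α : ℂ) ^ 2 + (β₁ : ℂ) * (β₂ : ℂ))) +
    4 * (ξ⁻¹ + ξ) * (-4 * ((α : ℂ) ^ 2 + (β₁ : ℂ) * (β₂ : ℂ)) +
      Complex.I * ((β₁ : ℂ) * ε + (β₂ : ℂ)) * (ω : ℂ) * (h : ℂ)) +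
    2 * (1 + 12 * ((α : ℂ) ^ 2 + (β₁ : ℂ) * (β₂ : ℂ)) -
      4 * Complex.I * ((β₁ : ℂ) * ε + (β₂ : ℂ)) * (ω : ℂ) * (h : ℂ) -
      2 * Kex ^ 2)

/-- The `P⁰` DG dispersion determinant is a Laurent polynomial
`C₂ξ² + C₁ξ + C₀ + C₋₁ξ⁻¹ + C₋₂ξ⁻²` whose coefficients of `ξ²` and `ξ⁻²` both
equal `−1 + 4(α² + β₁β₂)`; hence the discrete wavenumbers are roots of a
quadratic in `ξ` when `α² + β₁β₂ = 1/4`, and of a quartic otherwise. -/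
theorem dgP0_dispersion_polynomial
    (α β₁ β₂ : ℝ) (ε Kex : ℂ) (ω h : ℝ) :
    ∃ c₃ c₂ c₁ : ℂ,
      (∀ ξ : ℂ, ξ ≠ 0 →
        ξ ^ 2 * dgP0Det α β₁ β₂ ε Kex ω h ξ =
          ((-1 + 4 * ((α : ℂ) ^ 2 + (β₁ : ℂ) * (β₂ : ℂ))) * ξ ^ 4 +
            c₃ * ξ ^ 3 + c₂ * ξ ^ 2 + c₁ * ξ +
            (-1 + 4 * ((α : ℂ) ^ 2 + (β₁ : ℂ) * (β₂ : ℂ))))) ∧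
      (α ^ 2 + β₁ * β₂ = 1 / 4 →
        ∀ ξ : ℂ, ξ ≠ 0 →
          (dgP0Det α β₁ β₂ ε Kex ω h ξ = 0 ↔
            c₃ * ξ ^ 2 + c₂ * ξ + c₁ = 0)) ∧
      (α ^ 2 + β₁ * β₂ ≠ 1 / 4 →
        ∀ ξ : ℂ, ξ ≠ 0 →
          (dgP0Det α β₁ β₂ ε Kex ω h ξ = 0 ↔
            (-1 + 4 * ((α : ℂ) ^ 2 + (β₁ : ℂ) * (β₂ : ℂ))) * ξ ^ 4 +
              c₃ * ξ ^ 3 + c₂ * ξ ^ 2 + c₁ * ξ +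
              (-1 + 4 * ((α : ℂ) ^ 2 + (β₁ : ℂ) * (β₂ : ℂ))) = 0)) := by
  set S : ℂ := (α : ℂ) ^ 2 + (β₁ : ℂ) * (β₂ : ℂ) with hS
  refine ⟨4 * (-4 * S + Complex.I * ((β₁ : ℂ) * ε + (β₂ : ℂ)) * (ω : ℂ) * (h : ℂ)),
    2 * (1 + 12 * S - 4 * Complex.I * ((β₁ : ℂ) * ε + (β₂ : ℂ)) * (ω : ℂ) * (h : ℂ) -
      2 * Kex ^ 2),
    4 * (-4 * S + Complex.I * ((β₁ : ℂ) * ε + (β₂ : ℂ)) * (ω : ℂ) * (h : ℂ)), ?_, ?_, ?_⟩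
  · intro ξ hξ
    simp only [dgP0Det, hS]
    field_simp
    ring
  · intro hquad ξ hξ
    have hid : ξ ^ 2 * dgP0Det α β₁ β₂ ε Kex ω h ξ =
        ((-1 + 4 * S) * ξ ^ 4 +
          (4 * (-4 * S + Complex.I * ((β₁ : ℂ) * ε + (β₂ : ℂ)) * (ω : ℂ) * (h : ℂ))) * ξ ^ 3 +
          (2 * (1 + 12 * S - 4 * Complex.I * ((β₁ : ℂ) * ε + (β₂ : ℂ)) * (ω : ℂ) * (h : ℂ) -
            2 * Kex ^ 2)) * ξ ^ 2 +
          (4 * (-4 * S + Complex.I * ((β₁ : ℂ) * ε + (β₂ : ℂ)) * (ω : ℂ) * (h : ℂ))) * ξ +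
          (-1 + 4 * S)) := by
      simp only [dgP0Det, hS]; field_simp; ring
    have hS4 : S = 1 / 4 := by
      rw [hS]
      have : ((α ^ 2 + β₁ * β₂ : ℝ) : ℂ) = ((1 / 4 : ℝ) : ℂ) := by exact_mod_cast congrArg (fun x : ℝ => (x : ℂ)) hquad
      push_cast at this
      linear_combination this
    have hz : (-1 : ℂ) + 4 * S = 0 := by rw [hS4]; ring
    constructor
    · intro hdet
      have h2 : ξ ^ 2 * dgP0Det α β₁ β₂ ε Kex ω h ξ = 0 := by rw [hdet]; ring
      rw [hid, hz] at h2
      have h3 : ξ * ((4 * (-4 * S + Complex.I * ((β₁ : ℂ) * ε + (β₂ : ℂ)) * (ω : ℂ) * (h : ℂ))) * ξ ^ 2 +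
          (2 * (1 + 12 * S - 4 * Complex.I * ((β₁ : ℂ) * ε + (β₂ : ℂ)) * (ω : ℂ) * (h : ℂ) -
            2 * Kex ^ 2)) * ξ +
          (4 * (-4 * S + Complex.I * ((β₁ : ℂ) * ε + (β₂ : ℂ)) * (ω : ℂ) * (h : ℂ)))) = 0 := by
        rw [← h2]; ring
      rcases mul_eq_zero.1 h3 with h | h
      · exact absurd h hξ
      · exact h
    · intro hq
      have h2 : ξ ^ 2 * dgP0Det α β₁ β₂ ε Kex ω h ξ = 0 := by
        rw [hid, hz]
        calc (0 : ℂ) * ξ ^ 4 +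
            (4 * (-4 * S + Complex.I * ((β₁ : ℂ) * ε + (β₂ : ℂ)) * (ω : ℂ) * (h : ℂ))) * ξ ^ 3 +
            (2 * (1 + 12 * S - 4 * Complex.I * ((β₁ : ℂ) * ε + (β₂ : ℂ)) * (ω : ℂ) * (h : ℂ) -
              2 * Kex ^ 2)) * ξ ^ 2 +
            (4 * (-4 * S + Complex.I * ((β₁ : ℂ) * ε + (β₂ : ℂ)) * (ω : ℂ) * (h : ℂ))) * ξ + 0
            = ξ * ((4 * (-4 * S + Complex.I * ((β₁ : ℂ) * ε + (β₂ : ℂ)) * (ω : ℂ) * (h : ℂ))) * ξ ^ 2 +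
              (2 * (1 + 12 * S - 4 * Complex.I * ((β₁ : ℂ) * ε + (β₂ : ℂ)) * (ω : ℂ) * (h : ℂ) -
                2 * Kex ^ 2)) * ξ +
              (4 * (-4 * S + Complex.I * ((β₁ : ℂ) * ε + (β₂ : ℂ)) * (ω : ℂ) * (h : ℂ)))) := by ring
          _ = ξ * 0 := by rw [hq]
          _ = 0 := by ring
      rcases mul_eq_zero.1 h2 with h | h
      · exact absurd (pow_eq_zero_iff (by norm_num) |>.1 h) hξ
      · exact h
  · intro _ ξ hξ
    have hid : ξ ^ 2 * dgP0Det α β₁ β₂ ε Kex ω h ξ =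
        ((-1 + 4 * S) * ξ ^ 4 +
          (4 * (-4 * S + Complex.I * ((β₁ : ℂ) * ε + (β₂ : ℂ)) * (ω : ℂ) * (h : ℂ))) * ξ ^ 3 +
          (2 * (1 + 12 * S - 4 * Complex.I * ((β₁ : ℂ) * ε + (β₂ : ℂ)) * (ω : ℂ) * (h : ℂ) -
            2 * Kex ^ 2)) * ξ ^ 2 +
          (4 * (-4 * S + Complex.I * ((β₁ : ℂ) * ε + (β₂ : ℂ)) * (ω : ℂ) * (h : ℂ))) * ξ +
          (-1 + 4 * S)) := by
      simp only [dgP0Det, hS]; field_simp; ring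
    constructor
    · intro hdet
      rw [← hid, hdet]; ring
    · intro hq
      have h2 : ξ ^ 2 * dgP0Det α β₁ β₂ ε Kex ω h ξ = 0 := by rw [hid]; exact hq
      rcases mul_eq_zero.1 h2 with h | h
      · exact absurd (pow_eq_zero_iff (by norm_num) |>.1 h) hξ
      · exact h
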